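/- arXiv:0708.0652 — 2 statements merged into one kernel-verified Lean document; each statement's English description precedes it below -/
import Mathlib

section
/- Let C* be a properly convex cone in ℝⁿ with nonempty interior of its dual C (equivalently C* contains no line and C is a proper open convex cone). If a distribution u ∈ 𝒟'(ℝⁿ) has support contained in C* with 0 ∈ supp(u), and the analytic wavefront set of u satisfies WF_A(u) ⊆ ℝⁿ × Γ for some closed cone Γ ≠ ℝⁿ, then a contradiction arises; hence WF_A(u) is not contained in ℝⁿ × Γ for any closed cone Γ strictly smaller than ℝⁿ. -/
/-!
The exterior normals to `supp u ⊆ C*` at `0` contain `-C`, an open nonempty set, so they span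
all of `ℝⁿ`; Hörmander's theorem then puts every nonzero covector into `Γ`. A closed set
containing `ℝⁿ ∖ {0}` is all of `ℝⁿ` once `n > 0`, contradicting `Γ ≠ ℝⁿ`.
-/

open scoped RealInnerProductSpace Pointwise Topology

theorem neg_subset_polar_of_subset_dual {E : Type*} [NormedAddCommGroup E]
    [InnerProductSpace ℝ E] {C s : Set E} (hs : s ⊆ {ξ | ∀ y ∈ C, 0 ≤ ⟪ξ, y⟫}) :
    -C ⊆ {ν | ∀ x ∈ s, ⟪ν, x⟫ ≤ 0} := by
  intro ν hν x hx
  have := hs hx (-ν) hν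
  rwa [inner_neg_right, real_inner_comm, neg_nonneg] at this

theorem Submodule.span_eq_top_of_isOpen_subset {M : Type*} [TopologicalSpace M]
    [AddCommGroup M] [ContinuousAdd M] [Module ℝ M] [ContinuousSMul ℝ M] {U s : Set M}
    (hU : IsOpen U) (hne : U.Nonempty) (hUs : U ⊆ s) : Submodule.span ℝ s = ⊤ :=
  (Submodule.span ℝ s).eq_top_of_nonempty_interior' <|
    hne.mono (interior_maximal (hUs.trans Submodule.subset_span) hU)

theorem IsClosed.eq_univ_of_compl_singleton_subset {X : Type*} [TopologicalSpace X]
    {Γ : Set X} (hΓ : IsClosed Γ) (x : X) [(𝓝[≠] x).NeBot] (h : {x}ᶜ ⊆ Γ) :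
    Γ = Set.univ :=
  Set.eq_univ_of_univ_subset <| closure_compl_singleton x ▸ hΓ.closure_subset_iff.mpr h

theorem uniqueness_key_step_general (n : ℕ) (hn : 0 < n)
    (C Cstar suppu : Set (EuclideanSpace ℝ (Fin n)))
    (hCo : IsOpen C) (hCne : C.Nonempty)
    (hCstar : Cstar = {ξ : EuclideanSpace ℝ (Fin n) | ∀ y ∈ C, 0 ≤ ⟪ξ, y⟫})
    (hsupp : suppu ⊆ Cstar)
    (WFAu : Set ((EuclideanSpace ℝ (Fin n)) × (EuclideanSpace ℝ (Fin n))))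
    (hHorm : ∀ ν ∈ Submodule.span ℝ
        {ν : EuclideanSpace ℝ (Fin n) | ∀ x ∈ suppu, ⟪ν, x⟫ ≤ 0},
      ν ≠ 0 → ((0 : EuclideanSpace ℝ (Fin n)), ν) ∈ WFAu)
    (Γ : Set (EuclideanSpace ℝ (Fin n))) (hΓc : IsClosed Γ)
    (hΓne : Γ ≠ Set.univ)
    (hWF : WFAu ⊆ Set.univ ×ˢ Γ) :
    False := by
  subst hCstar
  have hspan := Submodule.span_eq_top_of_isOpen_subset hCo.neg hCne.neg
    (neg_subset_polar_of_subset_dual hsupp)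
  have hnonzero : {0}ᶜ ⊆ Γ := fun ν hν ↦ (hWF (hHorm ν (hspan ▸ trivial) hν)).2
  have : NeZero n := ⟨hn.ne'⟩
  exact hΓne (hΓc.eq_univ_of_compl_singleton_subset 0 hnonzero)

/-- Key step of the Uniqueness Theorem.  Let `C` be a nonempty proper open convex cone
with dual cone `C*`, and let `u` be a distribution with support `suppu ⊆ C*` and
`0 ∈ suppu`.  Granting Hörmander's theorem 9.6.6 — every nonzero element of the linear
span of the exterior normals to the support at `0` (here: `{ν | ⟨ν,x⟩ ≤ 0 ∀ x ∈ supp u}`)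
lies in `WF_A(u)` over the point `0` — the inclusion `WF_A(u) ⊆ ℝⁿ × Γ` for a closed
cone `Γ ≠ ℝⁿ` leads to a contradiction. -/
theorem uniqueness_key_step (n : ℕ) (hn : 0 < n)
    (C Cstar suppu : Set (EuclideanSpace ℝ (Fin n)))
    (hCo : IsOpen C) (hCne : C.Nonempty) (hCconv : Convex ℝ C)
    (hCcone : ∀ c : ℝ, 0 < c → ∀ y ∈ C, c • y ∈ C)
    (hCstar : Cstar = {ξ : EuclideanSpace ℝ (Fin n) | ∀ y ∈ C, 0 ≤ ⟪ξ, y⟫})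
    (hsupp : suppu ⊆ Cstar) (h0 : (0 : EuclideanSpace ℝ (Fin n)) ∈ suppu)
    (WFAu : Set ((EuclideanSpace ℝ (Fin n)) × (EuclideanSpace ℝ (Fin n))))
    (hHorm : ∀ ν ∈ Submodule.span ℝ
        {ν : EuclideanSpace ℝ (Fin n) | ∀ x ∈ suppu, ⟪ν, x⟫ ≤ 0},
      ν ≠ 0 → ((0 : EuclideanSpace ℝ (Fin n)), ν) ∈ WFAu)
    (Γ : Set (EuclideanSpace ℝ (Fin n))) (hΓc : IsClosed Γ)
    (hΓcone : ∀ c : ℝ, 0 < c → ∀ θ ∈ Γ, c • θ ∈ Γ) (hΓne : Γ ≠ Set.univ)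
    (hWF : WFAu ⊆ Set.univ ×ˢ Γ) :
    False :=
  uniqueness_key_step_general n hn C Cstar suppu hCo hCne hCstar hsupp WFAu hHorm Γ hΓc hΓne hWF
end

section
/- Suppose f is holomorphic on the tube T(C') = ℝⁿ + iC' (C' an open connected cone) and for each fixed y ∈ C' the function x ↦ f(x+iy)/P(i(x+iy)) belongs to L¹(ℝⁿ) ∩ L²(ℝⁿ), with a bound |f(z)/P(iz)| ≤ M (1+|z|)^{-n-ε} e^{h(y)} uniform on compact subsets of C'. Then the function h_y(ξ) = ∫_{ℝⁿ} [f(x+iy)/P(i(x+iy))] e^{i⟨ξ,x+iy⟩} dx is independent of y ∈ C'. -/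
/-!
Cauchy's theorem on the rectangle `[-T, T] × [y₁, y₂]` says that the two horizontal integrals over
`[-T, T]` differ by the two vertical sides. Since `g(z) e^{iξz}` is `O((1 + |Re z|)^{-1-ε})`
uniformly on the closed strip `y₁ ≤ Im z ≤ y₂` (the factor `e^{iξz}` has modulus `e^{-ξ Im z}`,
bounded there), the horizontal lines are integrable and the vertical sides tend to `0` as
`T → ∞`, so the full line integrals agree.
-/

open Complex MeasureTheory Filter Set Topology intervalIntegral
open scoped Interval

theorem integrable_of_norm_le_one_add_abs_rpow_neg {E : Type*} [NormedAddCommGroup E] {g : ℝ → E}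
    {C r : ℝ} (hr : 1 < r) (hg : Continuous g) (hbound : ∀ x, ‖g x‖ ≤ C * (1 + |x|) ^ (-r)) :
    Integrable g :=
  ((integrable_one_add_norm (by simpa using hr)).const_mul C).mono' hg.aestronglyMeasurable
    (.of_forall hbound)

theorem tendsto_one_add_abs_rpow_neg_cocompact {r : ℝ} (hr : 0 < r) :
    Tendsto (fun x : ℝ => (1 + |x|) ^ (-r)) (cocompact ℝ) (𝓝 0) :=
  (tendsto_rpow_neg_atTop hr).comp (tendsto_atTop_add_const_left _ 1
    (tendsto_norm_cocompact_atTop : Tendsto (|·|) _ _))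

section StripContourShift

variable {E : Type*} [NormedAddCommGroup E] [NormedSpace ℂ E]

theorem integral_add_mul_I_eq_of_tendsto_verticalIntegral {f : ℂ → E} {y₁ y₂ : ℝ}
    (hf : DifferentiableOn ℂ f (im ⁻¹' [[y₁, y₂]]))
    (h₁ : Integrable fun x : ℝ => f (x + y₁ * I)) (h₂ : Integrable fun x : ℝ => f (x + y₂ * I))
    (hvert : Tendsto (fun x : ℝ => ∫ y in y₁..y₂, f (x + y * I)) (cocompact ℝ) (𝓝 0)) :
    ∫ x : ℝ, f (x + y₁ * I) = ∫ x : ℝ, f (x + y₂ * I) := by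
  have hrect : ∀ T : ℝ, ((∫ x in -T..T, f (x + y₁ * I)) - ∫ x in -T..T, f (x + y₂ * I)) +
      I • (∫ y in y₁..y₂, f (T + y * I)) - I • (∫ y in y₁..y₂, f (((-T : ℝ) : ℂ) + y * I)) = 0 :=
    fun T => by
      simpa using integral_boundary_rect_eq_zero_of_differentiableOn f (-T + y₁ * I) (T + y₂ * I)
        (hf.mono fun z hz => by simpa using hz.2)
  have hlim := (((intervalIntegral_tendsto_integral h₁ tendsto_neg_atTop_atBot tendsto_id).sub
      (intervalIntegral_tendsto_integral h₂ tendsto_neg_atTop_atBot tendsto_id)).add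
      ((hvert.comp atTop_le_cocompact).const_smul I)).sub
      ((hvert.comp (tendsto_neg_atTop_atBot.mono_right atBot_le_cocompact)).const_smul I)
  rw [← sub_eq_zero]
  simpa using tendsto_nhds_unique hlim (tendsto_const_nhds.congr fun T => (hrect T).symm)

theorem tendsto_verticalIntegral_zero_of_norm_le {f : ℂ → E} {y₁ y₂ : ℝ} {φ : ℝ → ℝ}
    (hφ : Tendsto φ (cocompact ℝ) (𝓝 0)) (hfφ : ∀ z : ℂ, z.im ∈ [[y₁, y₂]] → ‖f z‖ ≤ φ z.re) :
    Tendsto (fun x : ℝ => ∫ y in y₁..y₂, f (x + y * I)) (cocompact ℝ) (𝓝 0) := by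
  rw [tendsto_zero_iff_norm_tendsto_zero]
  refine squeeze_zero (fun _ => norm_nonneg _) (fun x => ?_)
    (by simpa using hφ.mul_const |y₂ - y₁|)
  exact norm_integral_le_of_norm_le_const fun y hy => by
    simpa using hfφ (x + y * I) (by simpa using uIoc_subset_uIcc hy)

theorem integral_add_mul_I_eq_of_norm_le_one_add_abs_rpow_neg {f : ℂ → E} {y₁ y₂ C r : ℝ}
    (hr : 1 < r) (hf : DifferentiableOn ℂ f (im ⁻¹' [[y₁, y₂]]))
    (hbound : ∀ z : ℂ, z.im ∈ [[y₁, y₂]] → ‖f z‖ ≤ C * (1 + |z.re|) ^ (-r)) :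
    ∫ x : ℝ, f (x + y₁ * I) = ∫ x : ℝ, f (x + y₂ * I) := by
  have hline : ∀ y ∈ [[y₁, y₂]], Integrable fun x : ℝ => f (x + y * I) := fun y hy =>
    integrable_of_norm_le_one_add_abs_rpow_neg hr
      (hf.continuousOn.comp_continuous (by fun_prop) fun x => by simpa using hy)
      fun x => by simpa using hbound (x + y * I) (by simpa using hy)
  exact integral_add_mul_I_eq_of_tendsto_verticalIntegral hf (hline y₁ left_mem_uIcc)
    (hline y₂ right_mem_uIcc) <| tendsto_verticalIntegral_zero_of_norm_le
      (by simpa using (tendsto_one_add_abs_rpow_neg_cocompact (by linarith)).const_mul C) hbound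

end StripContourShift

theorem norm_cexp_I_mul_le {ξ y₁ y₂ : ℝ} {z : ℂ} (hz : z.im ∈ [[y₁, y₂]]) :
    ‖cexp (I * ξ * z)‖ ≤ Real.exp (|ξ| * max |y₁| |y₂|) := by
  have him : |z.im| ≤ max |y₁| |y₂| := by
    rcases mem_uIcc.1 hz with h | h
    · exact abs_le_max_abs_abs h.1 h.2
    · exact max_comm |y₂| |y₁| ▸ abs_le_max_abs_abs h.1 h.2
  rw [norm_exp, Real.exp_le_exp]
  calc (I * ξ * z).re = -(ξ * z.im) := by simp
    _ ≤ |ξ * z.im| := neg_le_abs _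
    _ ≤ |ξ| * max |y₁| |y₂| := abs_mul ξ z.im ▸ mul_le_mul_of_nonneg_left him (abs_nonneg ξ)

theorem contour_shift_independence_general (a b ε : ℝ) (hε : 0 < ε)
    (g : ℂ → ℂ) (hg : DifferentiableOn ℂ g {z : ℂ | a < z.im ∧ z.im < b})
    (hbound : ∀ K : Set ℝ, IsCompact K → K ⊆ Set.Ioo a b → ∃ M > (0 : ℝ),
      ∀ z : ℂ, z.im ∈ K → ‖g z‖ ≤ M * (1 + |z.re|) ^ (-(1 : ℝ) - ε))
    (ξ : ℝ) (y₁ y₂ : ℝ) (hy₁ : y₁ ∈ Set.Ioo a b) (hy₂ : y₂ ∈ Set.Ioo a b) :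
    (∫ x : ℝ, g ((x : ℂ) + y₁ * Complex.I) *
        Complex.exp (Complex.I * ξ * ((x : ℂ) + y₁ * Complex.I))) =
    ∫ x : ℝ, g ((x : ℂ) + y₂ * Complex.I) *
        Complex.exp (Complex.I * ξ * ((x : ℂ) + y₂ * Complex.I)) := by
  have hK : [[y₁, y₂]] ⊆ Ioo a b := ordConnected_Ioo.uIcc_subset hy₁ hy₂
  obtain ⟨M, hM₀, hM⟩ := hbound _ isCompact_uIcc hK
  refine integral_add_mul_I_eq_of_norm_le_one_add_abs_rpow_neg
    (f := fun z => g z * cexp (I * ξ * z)) (C := M * Real.exp (|ξ| * max |y₁| |y₂|))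
    (r := 1 + ε) (by linarith)
    ((hg.mono fun z hz => hK hz).mul (by fun_prop)) fun z hz => ?_
  calc ‖g z * cexp (I * ξ * z)‖ = ‖g z‖ * ‖cexp (I * ξ * z)‖ := norm_mul _ _
    _ ≤ M * (1 + |z.re|) ^ (-(1 : ℝ) - ε) * Real.exp (|ξ| * max |y₁| |y₂|) :=
      mul_le_mul (hM z hz) (norm_cexp_I_mul_le hz) (norm_nonneg _) (by positivity [hM₀.le])
    _ = M * Real.exp (|ξ| * max |y₁| |y₂|) * (1 + |z.re|) ^ (-(1 + ε)) := by ring_nf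

/-- Contour-shift (Cauchy–Poincaré) independence, `n = 1` version: if `g` is
holomorphic on the strip `{z : a < Im z < b}` with bound
`|g(x+iy)| ≤ M (1+|x|)^{-1-ε}` uniformly for `y` in compact subsets of `(a,b)`, then
`∫_ℝ g(x+iy) e^{iξ(x+iy)} dx` is independent of `y ∈ (a,b)`. -/
theorem contour_shift_independence (a b ε : ℝ) (hab : a < b) (hε : 0 < ε)
    (g : ℂ → ℂ) (hg : DifferentiableOn ℂ g {z : ℂ | a < z.im ∧ z.im < b})
    (hbound : ∀ K : Set ℝ, IsCompact K → K ⊆ Set.Ioo a b → ∃ M > (0 : ℝ),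
      ∀ z : ℂ, z.im ∈ K → ‖g z‖ ≤ M * (1 + |z.re|) ^ (-(1 : ℝ) - ε))
    (ξ : ℝ) (y₁ y₂ : ℝ) (hy₁ : y₁ ∈ Set.Ioo a b) (hy₂ : y₂ ∈ Set.Ioo a b) :
    (∫ x : ℝ, g ((x : ℂ) + y₁ * Complex.I) *
        Complex.exp (Complex.I * ξ * ((x : ℂ) + y₁ * Complex.I))) =
    ∫ x : ℝ, g ((x : ℂ) + y₂ * Complex.I) *
        Complex.exp (Complex.I * ξ * ((x : ℂ) + y₂ * Complex.I)) :=
  contour_shift_independence_general a b ε hε g hg hbound ξ y₁ y₂ hy₁ hy₂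
end
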